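/- Let y ∈ ℤ and let u, v ≥ 0 be integers. Let b_w(X) = X(X−1)⋯(X−w+1)/w! ∈ ℚ[X] and let b_w′ denote its formal derivative. Then ∑_{w=0}^{v} (−1)^w · b_w′(y) · C(y+u−w, v−w) = − ∑_{w=1}^{v} (1/w) · C(u−w, v−w). -/

import Mathlib

/-- The descending factorial `z(z-1)⋯(z-n+1)` of a rational number. -/
def descFac (z : ℚ) (n : ℕ) : ℚ := ∏ i ∈ Finset.range n, (z - i)

/-- The generalized binomial coefficient `C(z, n)` for `z ∈ ℚ`, `n ∈ ℤ`:
`z(z-1)⋯(z-n+1)/n!` for `n ≥ 0`, and `0` for `n < 0`. -/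
def qchoose (z : ℚ) (n : ℤ) : ℚ :=
  if 0 ≤ n then descFac z n.toNat / (Nat.factorial n.toNat : ℚ) else 0

/-- The binomial coefficient polynomial `b_w(X) = X(X-1)⋯(X-w+1)/w! ∈ ℚ[X]`. -/
noncomputable def bpoly (w : ℕ) : Polynomial ℚ :=
  ((Nat.factorial w : ℚ))⁻¹ • ∏ i ∈ Finset.range w, (Polynomial.X - Polynomial.C (i : ℚ))

/-!
The left-hand side is the value at `(x, t) = (y, y + u)` of
`S(x, t) = ∑_{w ≤ v} (-1)^w b_w'(x) C(t - w, v - w)`.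
Both factors satisfy Pascal's rule: `b_{w+1}(X + 1) = b_{w+1}(X) + b_w(X)`, hence
`b_{w+1}'(x + 1) = b_{w+1}'(x) + b_w'(x)`, and `C(t + 1, n) = C(t, n) + C(t, n - 1)`.
With these, `S(x + 1, t + 1) - S(x, t)` telescopes to zero, so `S(y, y + u) = S(0, u)`,
and `b_w'(0) = (-1)^(w-1) / w` for `w ≥ 1` gives the right-hand side.
-/

open Polynomial Finset

theorem descPochhammer_eq_prod_range {R : Type*} [CommRing R] (n : ℕ) :
    descPochhammer R n = ∏ i ∈ range n, (X - C (i : R)) := by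
  induction n with
  | zero => simp
  | succ n ih => rw [descPochhammer_succ_right, ih, prod_range_succ, map_natCast]

theorem descPochhammer_succ_comp_X_add_one {R : Type*} [CommRing R] (n : ℕ) :
    (descPochhammer R (n + 1)).comp (X + 1) =
      descPochhammer R (n + 1) + ((n : R) + 1) • descPochhammer R n := by
  nth_rw 1 [descPochhammer_succ_left]
  rw [mul_comp, comp_assoc, X_comp, sub_comp, X_comp, one_comp, add_sub_cancel_right, comp_X,
    descPochhammer_succ_right, smul_eq_C_mul, map_add, map_natCast, map_one]
  ring

theorem descPochhammer_eval_neg_one {R : Type*} [CommRing R] (n : ℕ) :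
    (descPochhammer R n).eval (-1) = (-1) ^ n * n.factorial := by
  induction n with
  | zero => simp
  | succ n ih =>
    rw [descPochhammer_succ_eval, ih, pow_succ, Nat.factorial_succ, Nat.cast_mul]
    push_cast
    ring

lemma bpoly_eq_smul_descPochhammer (w : ℕ) :
    bpoly w = (w.factorial : ℚ)⁻¹ • descPochhammer ℚ w := by
  rw [bpoly, descPochhammer_eq_prod_range]

lemma bpoly_succ_comp_X_add_one (w : ℕ) :
    (bpoly (w + 1)).comp (X + 1) = bpoly (w + 1) + bpoly w := by
  simp only [bpoly_eq_smul_descPochhammer, smul_comp, descPochhammer_succ_comp_X_add_one,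
    smul_add, smul_smul, Nat.factorial_succ, Nat.cast_mul, Nat.cast_succ]
  congr 2
  field_simp

lemma derivative_bpoly_zero : derivative (bpoly 0) = 0 := by
  simp [bpoly]

lemma derivative_bpoly_succ_eval_add_one (w : ℕ) (x : ℚ) :
    (derivative (bpoly (w + 1))).eval (x + 1) =
      (derivative (bpoly (w + 1))).eval x + (derivative (bpoly w)).eval x := by
  simpa [derivative_comp] using
    congr_arg (fun p => (derivative p).eval x) (bpoly_succ_comp_X_add_one w)

lemma derivative_bpoly_succ_eval_zero (w : ℕ) :
    (derivative (bpoly (w + 1))).eval 0 = (-1) ^ w / (w + 1) := by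
  rw [bpoly_eq_smul_descPochhammer, descPochhammer_succ_left]
  simp only [derivative_smul, derivative_mul, derivative_X, derivative_comp, eval_smul, eval_add,
    eval_mul, eval_one, eval_X, eval_comp, eval_sub, zero_sub, descPochhammer_eval_neg_one,
    zero_mul, add_zero, one_mul, smul_eq_mul, Nat.factorial_succ, Nat.cast_mul, Nat.cast_succ]
  field_simp

lemma qchoose_natCast (z : ℚ) (n : ℕ) : qchoose z n = (bpoly n).eval z := by
  simp [qchoose, descFac, bpoly_eq_smul_descPochhammer, descPochhammer_eval_eq_prod_range,
    div_eq_inv_mul]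

lemma qchoose_of_neg (z : ℚ) {n : ℤ} (hn : n < 0) : qchoose z n = 0 := if_neg hn.not_ge

lemma qchoose_add_one (z : ℚ) (n : ℤ) :
    qchoose (z + 1) n = qchoose z n + qchoose z (n - 1) := by
  rcases n with (_ | k) | k
  · simp [qchoose, descFac]
  · rw [Int.ofNat_eq_natCast, Nat.cast_succ, add_sub_cancel_right, ← Nat.cast_succ,
      qchoose_natCast, qchoose_natCast, qchoose_natCast, ← eval_add,
      ← bpoly_succ_comp_X_add_one, eval_comp]
    simp
  · rw [qchoose_of_neg _ (Int.negSucc_lt_zero k), qchoose_of_neg _ (Int.negSucc_lt_zero k),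
      qchoose_of_neg _ (by omega), add_zero]

noncomputable def bpolyDerivSum (v : ℕ) (x t : ℚ) : ℚ :=
  ∑ w ∈ range (v + 1),
    (-1) ^ w * (derivative (bpoly w)).eval x * qchoose (t - w) ((v : ℤ) - w)

lemma bpolyDerivSum_add_one (v : ℕ) (x t : ℚ) :
    bpolyDerivSum v (x + 1) (t + 1) = bpolyDerivSum v x t := by
  set g : ℕ → ℚ := fun w =>
    (-1) ^ w * (derivative (bpoly w)).eval x * qchoose (t - w) ((v : ℤ) - 1 - w) with hg
  have step : ∀ w : ℕ,
      (-1) ^ (w + 1) * (derivative (bpoly (w + 1))).eval (x + 1) *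
          qchoose (t + 1 - (w + 1 : ℕ)) ((v : ℤ) - (w + 1 : ℕ)) =
        (-1) ^ (w + 1) * (derivative (bpoly (w + 1))).eval x *
          qchoose (t - (w + 1 : ℕ)) ((v : ℤ) - (w + 1 : ℕ)) + (g (w + 1) - g w) := by
    intro w
    have ht : t + 1 - (w + 1 : ℕ) = t - (w + 1 : ℕ) + 1 := by push_cast; ring
    have ht' : t - (w : ℕ) = t - (w + 1 : ℕ) + 1 := by push_cast; ring
    have hn : (v : ℤ) - 1 - (w : ℕ) = (v : ℤ) - (w + 1 : ℕ) := by push_cast; ring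
    have hn' : (v : ℤ) - 1 - (w + 1 : ℕ) = (v : ℤ) - (w + 1 : ℕ) - 1 := by ring
    simp only [hg]
    rw [ht, qchoose_add_one, derivative_bpoly_succ_eval_add_one, ht', qchoose_add_one, hn, hn']
    ring
  have g_zero : g 0 = 0 := by simp [hg, derivative_bpoly_zero]
  have g_top : g v = 0 := by simp [hg, qchoose_of_neg]
  simp only [bpolyDerivSum, sum_range_succ' _ v, step, sum_add_distrib, sum_range_sub, g_zero,
    g_top, derivative_bpoly_zero, eval_zero, mul_zero, zero_mul, sub_zero, add_zero]

lemma bpolyDerivSum_add_intCast (v : ℕ) (x t : ℚ) (n : ℤ) :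
    bpolyDerivSum v (x + n) (t + n) = bpolyDerivSum v x t := by
  induction n using Int.induction_on with
  | zero => simp
  | succ n ih =>
    rw [Int.cast_add, Int.cast_one, ← add_assoc, ← add_assoc, bpolyDerivSum_add_one, ih]
  | pred n ih =>
    rw [← ih, ← bpolyDerivSum_add_one]
    congr 1 <;> push_cast <;> ring

lemma bpolyDerivSum_zero_left (v : ℕ) (t : ℚ) :
    bpolyDerivSum v 0 t =
      -∑ w ∈ Icc 1 v, (1 / (w : ℚ)) * qchoose (t - w) ((v : ℤ) - w) := by
  rw [bpolyDerivSum, sum_range_succ', ← Ico_add_one_right_eq_Icc, sum_Ico_eq_sum_range,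
    ← sum_neg_distrib]
  simp only [derivative_bpoly_zero, eval_zero, mul_zero, zero_mul, add_zero, Nat.add_sub_cancel]
  refine sum_congr rfl fun w _ => ?_
  rw [derivative_bpoly_succ_eval_zero, add_comm 1 w]
  push_cast
  field_simp
  rw [← pow_add, Odd.neg_one_pow ⟨w, by ring⟩]
  ring

/-- `∑_{w=0}^{v} (-1)^w b_w'(y) C(y+u-w, v-w) = -∑_{w=1}^{v} (1/w) C(u-w, v-w)`,
where `b_w'` is the formal derivative of the binomial coefficient polynomial. -/
theorem stmt_7 (y : ℤ) (u v : ℕ) :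
    ∑ w ∈ Finset.range (v + 1),
        (-1 : ℚ) ^ w * (Polynomial.derivative (bpoly w)).eval (y : ℚ) *
          qchoose ((y : ℚ) + u - w) ((v : ℤ) - w) =
      -∑ w ∈ Finset.Icc 1 v, (1 / (w : ℚ)) * qchoose ((u : ℚ) - w) ((v : ℤ) - w) := by
  have h := bpolyDerivSum_add_intCast v 0 u y
  rw [zero_add, add_comm (u : ℚ), bpolyDerivSum_zero_left] at h
  exact h
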